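/- arXiv:2410.19066 — 3 statements merged into one kernel-verified Lean document; each statement's English description precedes it below -/
import Mathlib

section
/- Let V be a set of n variables and consider a complete Boolean k-CSP instance (every k-subset has a predicate rejecting at least one assignment). Then the number of satisfying assignments is at most ∑_{i=0}^{k-1} binom(n, i), hence O(n^{k-1}) for fixed k. -/
/-!
Identify an assignment `α : V → Bool` with its support `{v | α v = true}`. If the supports of
the satisfying assignments shattered a `k`-set `C`, some satisfying assignment would agree on `C`
with an assignment rejected by the predicate of `C`; since that predicate only reads `C`, this
is impossible. So the family of supports has VC-dimension below `k`, and the Sauer–Shelah lemma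
bounds its size by `∑_{i<k} (n choose i)`.
-/

open Finset

namespace Finset

variable {α : Type*} [DecidableEq α] {𝒜 : Finset (Finset α)} {k : ℕ}

lemma card_lt_of_shatters_of_forall_not_shatters
    (h𝒜 : ∀ s : Finset α, #s = k → ¬𝒜.Shatters s) {s : Finset α} (hs : 𝒜.Shatters s) :
    #s < k := by
  by_contra! hks
  obtain ⟨t, hts, htk⟩ := exists_subset_card_eq hks
  exact h𝒜 t htk (hs.mono_right hts)

lemma card_le_sum_range_choose_of_forall_not_shatters [Fintype α]
    (h𝒜 : ∀ s : Finset α, #s = k → ¬𝒜.Shatters s) :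
    #𝒜 ≤ ∑ i ∈ range k, (Fintype.card α).choose i := by
  simp_rw [← card_univ, ← card_powersetCard]
  refine (card_le_card_shatterer 𝒜).trans <|
    (card_le_card fun s hs ↦ mem_biUnion.2 ⟨#s, ?_⟩).trans card_biUnion_le
  exact ⟨mem_range.2 (card_lt_of_shatters_of_forall_not_shatters h𝒜 (mem_shatterer.1 hs)),
    mem_powersetCard_univ.2 rfl⟩

end Finset

section BoolSupport

variable {V : Type*} [Fintype V]

def boolSupport (α : V → Bool) : Finset V := univ.filter (α · = true)

lemma mem_boolSupport {α : V → Bool} {v : V} : v ∈ boolSupport α ↔ α v = true := by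
  simp [boolSupport]

lemma boolSupport_injective : Function.Injective (boolSupport (V := V)) := by
  intro α β h
  funext v
  simpa [mem_boolSupport] using congrArg (v ∈ ·) h

lemma eq_on_of_inter_boolSupport_eq [DecidableEq V] {C : Finset V} {α β : V → Bool}
    (h : C ∩ boolSupport α = C.filter (β · = true)) : ∀ v ∈ C, α v = β v := by
  intro v hv
  have := congrArg (v ∈ ·) h
  simp only [mem_inter, mem_filter, mem_boolSupport, hv, true_and, eq_iff_iff] at this
  simpa using this

lemma not_shatters_image_boolSupport [DecidableEq V] (S : Finset (V → Bool))
    (p : (V → Bool) → Bool) (C : Finset V)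
    (hdep : ∀ α β : V → Bool, (∀ v ∈ C, α v = β v) → p α = p β)
    (hS : ∀ α ∈ S, p α = true) (hreject : ∃ β, p β = false) :
    ¬(S.image boolSupport).Shatters C := by
  intro hC
  obtain ⟨β, hβ⟩ := hreject
  obtain ⟨_, hu, huC⟩ := hC (filter_subset (β · = true) C)
  obtain ⟨α, hα, rfl⟩ := mem_image.1 hu
  have := hdep α β (eq_on_of_inter_boolSupport_eq huC)
  rw [hS α hα, hβ] at this
  exact Bool.true_eq_false.mp this

end BoolSupport

theorem stmt1_general {V : Type*} [Fintype V] (k : ℕ)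
    (P : Finset V → (V → Bool) → Bool)
    (hdep : ∀ (C : Finset V) (α β : V → Bool), (∀ v ∈ C, α v = β v) → P C α = P C β)
    (hreject : ∀ C : Finset V, C.card = k → ∃ α : V → Bool, P C α = false) :
    Nat.card {α : V → Bool // ∀ C : Finset V, C.card = k → P C α = true}
      ≤ ∑ i ∈ Finset.range k, (Fintype.card V).choose i := by
  classical
  set Sat := univ.filter fun α : V → Bool ↦ ∀ C : Finset V, #C = k → P C α = true
  have hcard : Nat.card {α : V → Bool // ∀ C : Finset V, #C = k → P C α = true}
      = #(Sat.image boolSupport) := by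
    rw [card_image_of_injective _ boolSupport_injective, Nat.card_eq_fintype_card,
      Fintype.card_subtype]
  rw [hcard]
  refine card_le_sum_range_choose_of_forall_not_shatters fun C hC ↦ ?_
  exact not_shatters_image_boolSupport Sat (P C) C (hdep C)
    (fun α hα ↦ (mem_filter.1 hα).2 C hC) (hreject C hC)

/-- A complete Boolean k-CSP instance (every k-subset has a predicate,
depending only on its variables, rejecting at least one assignment) has at most
`∑_{i=0}^{k-1} choose n i` satisfying assignments. -/
theorem stmt1 {V : Type*} [Fintype V] [DecidableEq V] (k : ℕ) (hk : 1 ≤ k)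
    (P : Finset V → (V → Bool) → Bool)
    (hdep : ∀ (C : Finset V) (α β : V → Bool), (∀ v ∈ C, α v = β v) → P C α = P C β)
    (hreject : ∀ C : Finset V, C.card = k → ∃ α : V → Bool, P C α = false) :
    Nat.card {α : V → Bool // ∀ C : Finset V, C.card = k → P C α = true}
      ≤ ∑ i ∈ Finset.range k, (Fintype.card V).choose i :=
  stmt1_general k P hdep hreject
end

section
/- Suppose that for indices i = 1, 2, ..., N, event E_i can occur only if both (a) an independent uniform γ on an interval of length 0.01 falls in a set of measure at most c, and (b) item i appears first among items 1,...,i in a uniformly random ordering of N items (independent of γ). Then ∑_{i=s+1}^{N} Pr[E_i] ≤ 100c · ∑_{i=s+1}^{N} 1/i ≤ 100c · ln(N/s) for any 1 ≤ s < N, and if additionally Pr[E_i] = 0 for i ≤ s with s ≥ ε₁N, then ∑_i Pr[E_i] ≤ 100c · ln(1/ε₁) + O(c). -/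
/-!
Each `E i` lies in `A i ∩ B i`, so by independence `ℙ(E i) ≤ 100 c · 1/i`. Summing over
`s < i ≤ N` leaves `100 c` times a harmonic tail, which telescopes against
`1/(n+1) ≤ log (n+1) - log n` to at most `ln (N/s)`; when `s ≥ ε₁ N` this is at most
`ln (1/ε₁)`.
-/

open MeasureTheory Finset Real

theorem inv_natCast_succ_le_log_div {n : ℕ} (hn : 0 < n) :
    ((n + 1 : ℕ) : ℝ)⁻¹ ≤ log ((n + 1 : ℕ) / n) := by
  have hn' : (0 : ℝ) < n := by exact_mod_cast hn
  have h := one_sub_inv_le_log_of_pos (x := ((n + 1 : ℕ) : ℝ) / n) (by positivity)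
  rw [inv_div] at h
  convert h using 1
  push_cast
  field_simp
  ring

theorem sum_Icc_inv_le_log_div {s N : ℕ} (hs : 0 < s) (hsN : s ≤ N) :
    ∑ i ∈ Icc (s + 1) N, (i : ℝ)⁻¹ ≤ log (N / s) := by
  induction N, hsN using Nat.le_induction with
  | base =>
    have hs' : (s : ℝ) ≠ 0 := by positivity
    simp [div_self hs']
  | succ n hsn ih =>
    have hn : 0 < n := hs.trans_le hsn
    rw [sum_Icc_succ_top (by omega)]
    calc _ ≤ log (n / s) + log ((n + 1 : ℕ) / n) :=
          add_le_add ih (inv_natCast_succ_le_log_div hn)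
      _ = log ((n + 1 : ℕ) / s) := by
          rw [← log_mul (by positivity) (by positivity)]
          field_simp

theorem toReal_measure_le_mul_of_subset_inter {Ω : Type*} [MeasurableSpace Ω]
    {μ : Measure Ω} {E A B : Set Ω} {p q : ℝ} (hp : 0 ≤ p) (hq : 0 ≤ q)
    (hsub : E ⊆ A ∩ B) (hind : μ (A ∩ B) = μ A * μ B)
    (hA : μ A ≤ ENNReal.ofReal p) (hB : μ B ≤ ENNReal.ofReal q) :
    (μ E).toReal ≤ p * q := by
  refine ENNReal.toReal_le_of_le_ofReal (mul_nonneg hp hq) ?_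
  calc μ E ≤ μ (A ∩ B) := measure_mono hsub
    _ = μ A * μ B := hind
    _ ≤ ENNReal.ofReal p * ENNReal.ofReal q := mul_le_mul' hA hB
    _ = ENNReal.ofReal (p * q) := (ENNReal.ofReal_mul hp).symm

theorem one_div_natCast_eq_ofReal_inv {i : ℕ} (hi : 1 ≤ i) :
    1 / (i : ENNReal) = ENNReal.ofReal (i : ℝ)⁻¹ := by
  rw [ENNReal.ofReal_inv_of_pos (by exact_mod_cast hi), ENNReal.ofReal_natCast, one_div]

theorem stmt15_general {Ω : Type*} [MeasurableSpace Ω] (ℙ : Measure Ω)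
    (N s : ℕ) (hs : 1 ≤ s) (hsN : s < N)
    (c : ℝ) (hc : 0 ≤ c)
    (E A B : ℕ → Set Ω)
    (hsub : ∀ i, E i ⊆ A i ∩ B i)
    (hind : ∀ i, ℙ (A i ∩ B i) = ℙ (A i) * ℙ (B i))
    (hA : ∀ i, ℙ (A i) ≤ ENNReal.ofReal (100 * c))
    (hB : ∀ i, 1 ≤ i → ℙ (B i) = 1 / (i : ENNReal)) :
    (∑ i ∈ Finset.Icc (s + 1) N, (ℙ (E i)).toReal ≤
        100 * c * Real.log ((N : ℝ) / s)) ∧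
    (∀ ε₁ : ℝ, 0 < ε₁ → ε₁ * N ≤ (s : ℝ) → (∀ i ≤ s, ℙ (E i) = 0) →
      ∑ i ∈ Finset.Icc 1 N, (ℙ (E i)).toReal ≤
        100 * c * Real.log (1 / ε₁) + 100 * c) := by
  have hterm : ∀ i ∈ Icc (s + 1) N, (ℙ (E i)).toReal ≤ 100 * c * (i : ℝ)⁻¹ := fun i hmem =>
    have hi : 1 ≤ i := by grind
    toReal_measure_le_mul_of_subset_inter (by positivity) (by positivity) (hsub i) (hind i)
      (hA i) ((hB i hi).trans_le (one_div_natCast_eq_ofReal_inv hi).le)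
  have htail : ∑ i ∈ Icc (s + 1) N, (ℙ (E i)).toReal ≤ 100 * c * log (N / s) := by
    grw [sum_le_sum hterm, ← mul_sum, sum_Icc_inv_le_log_div hs hsN.le]
  refine ⟨htail, fun ε₁ hε hεN hzero => ?_⟩
  have hhead : ∑ i ∈ Icc 1 N, (ℙ (E i)).toReal = ∑ i ∈ Icc (s + 1) N, (ℙ (E i)).toReal := by
    refine (sum_subset (Icc_subset_Icc (by omega) le_rfl) fun i hi hi_tail => ?_).symm
    simp [hzero i (by grind)]
  have hN : (0 : ℝ) < N := by exact_mod_cast (by omega : 0 < N)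
  have hlog : log (N / s) ≤ log (1 / ε₁) := by
    refine log_le_log (by positivity) ?_
    rw [div_le_div_iff₀ (by positivity) hε]
    linarith
  calc ∑ i ∈ Icc 1 N, (ℙ (E i)).toReal
      = ∑ i ∈ Icc (s + 1) N, (ℙ (E i)).toReal := hhead
    _ ≤ 100 * c * log (1 / ε₁) := htail.trans (mul_le_mul_of_nonneg_left hlog (by positivity))
    _ ≤ 100 * c * log (1 / ε₁) + 100 * c := le_add_of_nonneg_right (by positivity)

/-- Suppose event `E i` can occur only if both `A i` (the cutoff `γ`,
uniform on an interval of length `0.01`, falls in a set of measure at most `c`, so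
`ℙ(A i) ≤ 100 c`) and `B i` (item `i` comes first among items `1..i` in a uniformly
random ordering, so `ℙ(B i) = 1/i`) occur, with `A i` and `B i` independent.  Then
`∑_{i=s+1}^N ℙ(E i) ≤ 100 c · ln(N/s)`, and if moreover `ℙ(E i) = 0` for `i ≤ s` with
`s ≥ ε₁ N`, then `∑_{i=1}^N ℙ(E i) ≤ 100 c · ln(1/ε₁) + 100 c`. -/
theorem stmt15 {Ω : Type*} [MeasurableSpace Ω] (ℙ : Measure Ω) [IsProbabilityMeasure ℙ]
    (N s : ℕ) (hs : 1 ≤ s) (hsN : s < N)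
    (c : ℝ) (hc : 0 ≤ c)
    (E A B : ℕ → Set Ω)
    (hsub : ∀ i, E i ⊆ A i ∩ B i)
    (hind : ∀ i, ℙ (A i ∩ B i) = ℙ (A i) * ℙ (B i))
    (hA : ∀ i, ℙ (A i) ≤ ENNReal.ofReal (100 * c))
    (hB : ∀ i, 1 ≤ i → ℙ (B i) = 1 / (i : ENNReal)) :
    (∑ i ∈ Finset.Icc (s + 1) N, (ℙ (E i)).toReal ≤
        100 * c * Real.log ((N : ℝ) / s)) ∧
    (∀ ε₁ : ℝ, 0 < ε₁ → ε₁ * N ≤ (s : ℝ) → (∀ i ≤ s, ℙ (E i) = 0) →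
      ∑ i ∈ Finset.Icc 1 N, (ℙ (E i)).toReal ≤
        100 * c * Real.log (1 / ε₁) + 100 * c) :=
  stmt15_general ℙ N s hs hsN c hc E A B hsub hind hA hB
end

section
/- For any constant ε > 0 and k ≥ 2, given a k-SAT instance on n₀ variables with m clauses, construct a new instance by adding n ≥ C·n₀/ε dummy variables (for suitable constant C depending on k) and, for every k-subset of the new variable set containing at least one dummy variable, adding the all-positive clause on that subset. Then: (1) the new instance has at least (1 − ε)·binom(n₀ + n, k) clauses, and (2) the minimum number of unsatisfied clauses in the new instance equals the minimum number of unsatisfied clauses in the original instance. -/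
/-!
Setting every dummy variable to true satisfies every padding clause, as each is positive and
contains a dummy variable; conversely, restricting an assignment to the original variables can
only lose unsatisfied clauses. So the two optima agree. The padding clauses correspond to the
`k`-sets of variables not contained in the `n₀` original ones, and at most a fraction
`n₀ / (n₀ + n) ≤ ε` of all `k`-sets is contained in them.
-/

open Finset

theorem Nat.choose_mul_le_mul_choose {m N k : ℕ} (hmN : m ≤ N) (hk : 0 < k) :
    m.choose k * N ≤ m * N.choose k := by
  obtain ⟨j, rfl⟩ : ∃ j, k = j + 1 := ⟨k - 1, by omega⟩
  obtain _ | m := m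
  · simp
  obtain ⟨N, rfl⟩ : ∃ N', N = N' + 1 := ⟨N - 1, by omega⟩
  refine Nat.le_of_mul_le_mul_right ?_ j.succ_pos
  calc (m + 1).choose (j + 1) * (N + 1) * (j + 1)
      = (m + 1) * m.choose j * (N + 1) := by rw [Nat.add_one_mul_choose_eq]; ring
    _ ≤ (m + 1) * N.choose j * (N + 1) := by gcongr; omega
    _ = (m + 1) * (N + 1).choose (j + 1) * (j + 1) := by
      rw [mul_assoc (m + 1) ((N + 1).choose _), ← Nat.add_one_mul_choose_eq]; ring

theorem Nat.cast_choose_le_mul_cast_choose {m N k : ℕ} {ε : ℝ} (hε : 0 ≤ ε) (hmN : m ≤ N)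
    (hm : (m : ℝ) ≤ ε * N) (hk : 0 < k) : (m.choose k : ℝ) ≤ ε * N.choose k := by
  rcases m.eq_zero_or_pos with rfl | hm0
  · rw [Nat.choose_eq_zero_of_lt hk, Nat.cast_zero]
    positivity
  have hN : (0 : ℝ) < N := by exact_mod_cast hm0.trans_le hmN
  refine le_of_mul_le_mul_right ?_ hN
  calc (m.choose k : ℝ) * N ≤ m * N.choose k := by
        exact_mod_cast Nat.choose_mul_le_mul_choose hmN hk
    _ ≤ ε * N * N.choose k := by gcongr
    _ = ε * N.choose k * N := by ring

theorem ciInf_le_ciInf_of_forall_exists_le {α : Type*} [ConditionallyCompleteLinearOrderBot α]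
    {ι ι' : Sort*} [Nonempty ι'] {f : ι → α} {g : ι' → α} (h : ∀ j, ∃ i, f i ≤ g j) :
    iInf f ≤ iInf g :=
  le_ciInf fun j => let ⟨i, hi⟩ := h j; (ciInf_le (OrderBot.bddBelow _) i).trans hi

namespace KSat

variable {V W : Type*}

def unsatCount (C : Finset (Finset (V × Bool))) (β : V → Bool) : ℕ :=
  #{c ∈ C | ∀ p ∈ c, β p.1 ≠ p.2}

def rename [DecidableEq W] (f : V → W) (C : Finset (Finset (V × Bool))) :
    Finset (Finset (W × Bool)) :=
  C.image fun c => c.image fun p => (f p.1, p.2)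

def paddingClauses (V W : Type*) [Fintype V] [Fintype W] [DecidableEq V] [DecidableEq W]
    (k : ℕ) : Finset (Finset ((V ⊕ W) × Bool)) :=
  ((univ : Finset (Finset (V ⊕ W))).filter fun S => #S = k ∧ ∃ w ∈ S, w.isRight = true).image
    fun S => S.image fun w => (w, true)

section unsatCount

variable {C D : Finset (Finset (V × Bool))} {β : V → Bool}

theorem unsatCount_mono (h : C ⊆ D) : unsatCount C β ≤ unsatCount D β :=
  card_le_card (filter_subset_filter _ h)

theorem unsatCount_union_le [DecidableEq V] :
    unsatCount (C ∪ D) β ≤ unsatCount C β + unsatCount D β := by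
  rw [unsatCount, filter_union]
  exact card_union_le _ _

theorem unsatCount_eq_zero (h : ∀ c ∈ C, ∃ p ∈ c, β p.1 = p.2) : unsatCount C β = 0 :=
  card_eq_zero.2 <| filter_eq_empty_iff.2 fun c hc hunsat =>
    let ⟨p, hp, hsat⟩ := h c hc; hunsat p hp hsat

theorem unsatCount_rename [DecidableEq V] [DecidableEq W] {f : V → W}
    (hf : Function.Injective f) (β : W → Bool) :
    unsatCount (rename f C) β = unsatCount C (β ∘ f) := by
  have hlit : Function.Injective fun p : V × Bool => (f p.1, p.2) :=
    hf.prodMap Function.injective_id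
  rw [unsatCount, rename, filter_image, card_image_of_injective _ (image_injective hlit)]
  simp only [unsatCount, forall_mem_image, Function.comp_apply]

end unsatCount

section padding

variable [Fintype V] [Fintype W] [DecidableEq V] [DecidableEq W] (k : ℕ)

theorem card_paddingClauses :
    #(paddingClauses V W k) + (Fintype.card V).choose k
      = (Fintype.card V + Fintype.card W).choose k := by
  have hlit : Function.Injective fun w : V ⊕ W => (w, true) := fun _ _ h => (Prod.ext_iff.1 h).1
  have hright : (univ : Finset (Finset (V ⊕ W))).filter (fun S => #S = k ∧ ∃ w ∈ S, w.isRight)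
      = (powersetCard k univ).filter (fun S => ∃ w ∈ S, w.isRight) := by
    ext S; simp
  have hleft : (powersetCard k univ).filter (fun S : Finset (V ⊕ W) => ¬∃ w ∈ S, w.isRight)
      = powersetCard k (univ.map .inl) := by
    ext S
    simp only [mem_filter, mem_powersetCard, true_and, subset_iff, mem_map, mem_univ,
      Function.Embedding.inl_apply, not_exists, not_and, Sum.not_isRight, Sum.isLeft_iff,
      implies_true, @eq_comm _ (Sum.inl _)]
    exact and_comm
  have hV : (Fintype.card V).choose k = #(powersetCard k (univ.map (.inl : V ↪ V ⊕ W))) := by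
    simp
  rw [paddingClauses, card_image_of_injective _ (image_injective hlit), hright, hV, ← hleft,
    card_filter_add_card_filter_not, card_powersetCard, card_univ, Fintype.card_sum]

theorem one_sub_mul_choose_le_card_paddingClauses {ε : ℝ} (hk : 0 < k) (hε : 0 ≤ ε)
    (hV : (Fintype.card V : ℝ) ≤ ε * (Fintype.card V + Fintype.card W)) :
    (1 - ε) * (Fintype.card V + Fintype.card W).choose k ≤ (#(paddingClauses V W k) : ℝ) := by
  have hcount : (#(paddingClauses V W k) : ℝ) + (Fintype.card V).choose k
      = (Fintype.card V + Fintype.card W).choose k := by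
    exact_mod_cast card_paddingClauses k
  have hsmall := Nat.cast_choose_le_mul_cast_choose hε (Nat.le_add_right _ (Fintype.card W))
    (by push_cast; exact hV) hk
  linarith

theorem unsatCount_paddingClauses (α : V → Bool) :
    unsatCount (paddingClauses V W k) (Sum.elim α fun _ => true) = 0 := by
  refine unsatCount_eq_zero fun c hc => ?_
  obtain ⟨S, hS, rfl⟩ := mem_image.1 hc
  obtain ⟨-, w, hwS, hw⟩ := (mem_filter.1 hS).2
  obtain ⟨w, rfl⟩ := Sum.isRight_iff.1 hw
  exact ⟨(Sum.inr w, true), mem_image_of_mem _ hwS, rfl⟩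

theorem iInf_unsatCount_rename_inl_union_paddingClauses (C : Finset (Finset (V × Bool))) :
    ⨅ β, unsatCount (rename Sum.inl C ∪ paddingClauses V W k) β = ⨅ α, unsatCount C α := by
  refine le_antisymm (ciInf_le_ciInf_of_forall_exists_le fun α => ?_)
    (ciInf_le_ciInf_of_forall_exists_le fun β => ?_)
  · refine ⟨Sum.elim α fun _ => true, ?_⟩
    calc unsatCount (rename Sum.inl C ∪ paddingClauses V W k) (Sum.elim α fun _ => true)
        ≤ unsatCount (rename Sum.inl C) (Sum.elim α fun _ => true)
          + unsatCount (paddingClauses V W k) (Sum.elim α fun _ => true) := unsatCount_union_le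
      _ = unsatCount C α := by
        rw [unsatCount_paddingClauses, unsatCount_rename Sum.inl_injective, Sum.elim_comp_inl,
          add_zero]
  · refine ⟨β ∘ Sum.inl, ?_⟩
    rw [← unsatCount_rename Sum.inl_injective]
    exact unsatCount_mono subset_union_left

end padding

end KSat

open KSat

theorem stmt16_general (k : ℕ) (hk : 2 ≤ k) (ε : ℝ) (hε0 : 0 < ε) :
    ∃ Cc : ℝ, 0 < Cc ∧
      ∀ (n₀ n : ℕ) (C₀ : Finset (Finset (Fin n₀ × Bool))),
        (∀ c ∈ C₀, c.card = k ∧ (c.image Prod.fst).card = k) →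
        Cc * n₀ / ε ≤ (n : ℝ) →
        ∀ newC : Finset (Finset ((Fin n₀ ⊕ Fin n) × Bool)),
          newC = C₀.image (fun c => c.image (fun p => (Sum.inl p.1, p.2))) ∪
            ((Finset.univ : Finset (Finset (Fin n₀ ⊕ Fin n))).filter
                (fun S => S.card = k ∧ ∃ w ∈ S, w.isRight = true)).image
              (fun S => S.image (fun w => (w, true))) →
          (1 - ε) * ((n₀ + n).choose k : ℝ) ≤ (newC.card : ℝ) ∧
          sInf {t : ℕ | ∃ α : Fin n₀ → Bool,
              (C₀.filter (fun c => ∀ p ∈ c, α p.1 ≠ p.2)).card = t} =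
          sInf {t : ℕ | ∃ β : (Fin n₀ ⊕ Fin n) → Bool,
              (newC.filter (fun c => ∀ p ∈ c, β p.1 ≠ p.2)).card = t} := by
  refine ⟨1, one_pos, fun n₀ n C₀ _ hn newC hnew => ?_⟩
  replace hnew : newC = rename Sum.inl C₀ ∪ paddingClauses (Fin n₀) (Fin n) k := hnew
  subst hnew
  have hn₀ : (n₀ : ℝ) ≤ ε * (n₀ + n) := by
    rw [one_mul, div_le_iff₀ hε0] at hn
    nlinarith
  constructor
  · have hpad := one_sub_mul_choose_le_card_paddingClauses (V := Fin n₀) (W := Fin n) k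
      (by omega) hε0.le (by simpa using hn₀)
    rw [Fintype.card_fin, Fintype.card_fin] at hpad
    exact hpad.trans (by exact_mod_cast card_le_card subset_union_right)
  · -- here `∀ p ∈ c, _` is decided through `Fintype`, in `unsatCount` through `Finset`
    have h := (iInf_unsatCount_rename_inl_union_paddingClauses (W := Fin n) k C₀).symm
    simp only [iInf, Set.range, unsatCount] at h
    convert h

/-- The dense reduction for Min-k-SAT.  A clause is a `k`-set of literals
(pairs variable/sign, with distinct variables); it is unsatisfied by `α` iff every literal
is falsified.  Given a k-SAT instance `C₀` on `Fin n₀`, add `n` dummy variables and, for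
every `k`-subset of the enlarged variable set containing a dummy variable, the
all-positive clause on it.  There is a constant `Cc` (depending only on `k`) such that
whenever `n ≥ Cc·n₀/ε`: (1) the new instance has at least `(1-ε)·choose (n₀+n) k`
clauses, and (2) the minimum numbers of unsatisfied clauses of the two instances agree. -/
theorem stmt16 (k : ℕ) (hk : 2 ≤ k) (ε : ℝ) (hε0 : 0 < ε) (hε1 : ε < 1) :
    ∃ Cc : ℝ, 0 < Cc ∧
      ∀ (n₀ n : ℕ) (C₀ : Finset (Finset (Fin n₀ × Bool))),
        (∀ c ∈ C₀, c.card = k ∧ (c.image Prod.fst).card = k) →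
        Cc * n₀ / ε ≤ (n : ℝ) →
        ∀ newC : Finset (Finset ((Fin n₀ ⊕ Fin n) × Bool)),
          newC = C₀.image (fun c => c.image (fun p => (Sum.inl p.1, p.2))) ∪
            ((Finset.univ : Finset (Finset (Fin n₀ ⊕ Fin n))).filter
                (fun S => S.card = k ∧ ∃ w ∈ S, w.isRight = true)).image
              (fun S => S.image (fun w => (w, true))) →
          (1 - ε) * ((n₀ + n).choose k : ℝ) ≤ (newC.card : ℝ) ∧
          sInf {t : ℕ | ∃ α : Fin n₀ → Bool,
              (C₀.filter (fun c => ∀ p ∈ c, α p.1 ≠ p.2)).card = t} =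
          sInf {t : ℕ | ∃ β : (Fin n₀ ⊕ Fin n) → Bool,
              (newC.filter (fun c => ∀ p ∈ c, β p.1 ≠ p.2)).card = t} :=
  stmt16_general k hk ε hε0
end
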